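/- For every non-negative integer n: (1) F̃(n) = (F̃(n) ∩ V₁) ⊕ (F̃(n) ∩ V₂); (2) F̃(n) = (F̃(n) ∩ W₁) ⊕ (F̃(n) ∩ W₂). -/

import Mathlib

open Submodule

/-- The decreasing sequence of subspaces `F̃(n)`:
`F̃(0) = E`, `F̃(n+1) = ∩_{i,j} ((F̃(n) ∩ Vᵢ) + (F̃(n) ∩ Wⱼ))`. -/
noncomputable def FTilde {K E : Type*} [Field K] [AddCommGroup E] [Module K E]
    (V W : Fin 2 → Submodule K E) : ℕ → Submodule K E
  | 0 => ⊤
  | n + 1 => ⨅ i : Fin 2, ⨅ j : Fin 2, (FTilde V W n ⊓ V i) ⊔ (FTilde V W n ⊓ W j)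

/-! By the modular law, if `F = (F ⊓ A) ⊔ (F ⊓ B)` and `F ⊓ A ≤ P ≤ F`, then
`P = (F ⊓ A) ⊔ (P ⊓ F ⊓ B)`, and this decomposition survives intersecting with any `Q ≥ F ⊓ B`;
so `P ⊓ Q` is again split by `A` and `B`. One step of the recursion defining `F̃` is such an
intersection, with respect to either pair `(V₁, V₂)` or `(W₁, W₂)`, so both splittings of
`F̃(n)` pass to `F̃(n+1)`. -/

section Lattice

variable {α ι κ : Type*}

theorem inf_sup_inf_inf_eq_of_sup_inf_eq [Lattice α] [IsModularLattice α] {F A B P Q : α}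
    (hF : F ⊓ A ⊔ F ⊓ B = F) (hAP : F ⊓ A ≤ P) (hPF : P ≤ F) (hBQ : F ⊓ B ≤ Q) :
    P ⊓ Q ⊓ A ⊔ P ⊓ Q ⊓ B = P ⊓ Q := by
  refine le_antisymm (sup_le inf_le_left inf_le_left) ?_
  have hP : P = F ⊓ A ⊔ F ⊓ B ⊓ P := by
    rw [← sup_inf_assoc_of_le _ hAP, hF, inf_eq_right.mpr hPF]
  calc P ⊓ Q = (F ⊓ B ⊓ P ⊔ F ⊓ A) ⊓ Q := by rw [sup_comm, ← hP]
    _ = F ⊓ B ⊓ P ⊔ F ⊓ A ⊓ Q := sup_inf_assoc_of_le _ (inf_le_left.trans hBQ)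
    _ ≤ P ⊓ Q ⊓ A ⊔ P ⊓ Q ⊓ B := sup_le
        (le_sup_of_le_right (le_inf (le_inf inf_le_right (inf_le_left.trans hBQ))
          (inf_le_left.trans inf_le_right)))
        (le_sup_of_le_left (le_inf (le_inf (inf_le_left.trans hAP) inf_le_right)
          (inf_le_left.trans inf_le_right)))

variable [CompleteLattice α]

theorem iInf_fin_two (f : Fin 2 → α) : ⨅ i, f i = f 0 ⊓ f 1 :=
  le_antisymm (le_inf (iInf_le f 0) (iInf_le f 1)) <|
    le_iInf fun i => by fin_cases i; exacts [inf_le_left, inf_le_right]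

def ftildeStep (V : ι → α) (W : κ → α) (F : α) : α :=
  ⨅ i, ⨅ j, F ⊓ V i ⊔ F ⊓ W j

theorem ftildeStep_comm (V : ι → α) (W : κ → α) (F : α) :
    ftildeStep V W F = ftildeStep W V F := by
  rw [ftildeStep, ftildeStep, iInf_comm]
  simp only [sup_comm]

theorem ftildeStep_sup_inf_eq [IsModularLattice α] [Nonempty κ] {V : Fin 2 → α} (W : κ → α)
    {F : α} (hF : F ⊓ V 0 ⊔ F ⊓ V 1 = F) :
    ftildeStep V W F ⊓ V 0 ⊔ ftildeStep V W F ⊓ V 1 = ftildeStep V W F := by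
  simp only [ftildeStep, iInf_fin_two]
  exact inf_sup_inf_inf_eq_of_sup_inf_eq hF (le_iInf fun _ => le_sup_left)
    (iInf_le_of_le (Classical.arbitrary κ) (sup_le inf_le_left inf_le_left))
    (le_iInf fun _ => le_sup_left)

end Lattice

section FTilde

variable {K E : Type*} [Field K] [AddCommGroup E] [Module K E] (V W : Fin 2 → Submodule K E)

theorem FTilde_zero : FTilde V W 0 = ⊤ :=
  rfl

theorem FTilde_succ (n : ℕ) : FTilde V W (n + 1) = ftildeStep V W (FTilde V W n) :=
  rfl

end FTilde

theorem stmt4_general {K E : Type*} [Field K] [AddCommGroup E] [Module K E]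
    (V W : Fin 2 → Submodule K E)
    (hV : IsCompl (V 0) (V 1)) (hW : IsCompl (W 0) (W 1)) :
    ∀ n : ℕ,
      (Disjoint (FTilde V W n ⊓ V 0) (FTilde V W n ⊓ V 1) ∧
        (FTilde V W n ⊓ V 0) ⊔ (FTilde V W n ⊓ V 1) = FTilde V W n) ∧
      (Disjoint (FTilde V W n ⊓ W 0) (FTilde V W n ⊓ W 1) ∧
        (FTilde V W n ⊓ W 0) ⊔ (FTilde V W n ⊓ W 1) = FTilde V W n) := by
  have hsplit : ∀ n, (FTilde V W n ⊓ V 0) ⊔ (FTilde V W n ⊓ V 1) = FTilde V W n ∧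
      (FTilde V W n ⊓ W 0) ⊔ (FTilde V W n ⊓ W 1) = FTilde V W n := by
    intro n
    induction n with
    | zero =>
      simp only [FTilde_zero, top_inf_eq]
      exact ⟨hV.sup_eq_top, hW.sup_eq_top⟩
    | succ n ih =>
      rw [FTilde_succ]
      refine ⟨ftildeStep_sup_inf_eq W ih.1, ?_⟩
      rw [ftildeStep_comm]
      exact ftildeStep_sup_inf_eq V ih.2
  exact fun n => ⟨⟨hV.disjoint.mono inf_le_right inf_le_right, (hsplit n).1⟩,
    ⟨hW.disjoint.mono inf_le_right inf_le_right, (hsplit n).2⟩⟩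

/-- For every `n`, `F̃(n) = (F̃(n) ∩ V₁) ⊕ (F̃(n) ∩ V₂)` and
`F̃(n) = (F̃(n) ∩ W₁) ⊕ (F̃(n) ∩ W₂)`. -/
theorem stmt4 {K E : Type*} [Field K] [AddCommGroup E] [Module K E]
    [FiniteDimensional K E] (hchar : (2 : K) ≠ 0)
    (V W : Fin 2 → Submodule K E)
    (hV : IsCompl (V 0) (V 1)) (hW : IsCompl (W 0) (W 1)) :
    ∀ n : ℕ,
      (Disjoint (FTilde V W n ⊓ V 0) (FTilde V W n ⊓ V 1) ∧
        (FTilde V W n ⊓ V 0) ⊔ (FTilde V W n ⊓ V 1) = FTilde V W n) ∧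
      (Disjoint (FTilde V W n ⊓ W 0) (FTilde V W n ⊓ W 1) ∧
        (FTilde V W n ⊓ W 0) ⊔ (FTilde V W n ⊓ W 1) = FTilde V W n) :=
  stmt4_general V W hV hW
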